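/- arXiv:1109.2359 — 2 statements merged into one kernel-verified Lean document; each statement's English description precedes it below -/
import Mathlib

section
/- For weight vectors ω, σ, χ : Fin (n+1) → ℕ with positive coordinates, the rational number s' = s(σ,ω)·s(χ,σ)/s(χ,ω) is a positive integer, and the composition e(χ/σ) ∘ e(σ/ω) : P(ω) → P(χ) equals both e(s') ∘ e(χ/ω) and e(χ/ω) ∘ e(s'), where e(s') denotes the s'-th power map on P(χ) and on P(ω) respectively. -/
noncomputable section

/-- The unit sphere in `ℂ^m` (the sphere `S^{2m-1}`). -/
abbrev Sph (m : ℕ) : Type := {z : Fin m → ℂ // ∑ i, ‖z i‖ ^ 2 = 1}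

/-- The relation on the sphere whose quotient is the weighted projective space `P(χ)`:
`z ∼ w` iff `w = t ·_χ z` for some unimodular `t`. -/
def wRel (m : ℕ) (χ : Fin m → ℕ) (z w : Sph m) : Prop :=
  ∃ t : ℂ, ‖t‖ = 1 ∧ ∀ i, (w : Fin m → ℂ) i = t ^ χ i * (z : Fin m → ℂ) i

/-- The weighted projective space `P(χ)`, with the quotient topology. -/
abbrev WP (m : ℕ) (χ : Fin m → ℕ) : Type := Quot (wRel m χ)

/-- The class `[z]_χ` of a point of the sphere in `P(χ)`. -/
def wpMk (m : ℕ) (χ : Fin m → ℕ) (z : Sph m) : WP m χ := Quot.mk _ z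

/-- `s(χ,ω)`: the least positive integer `s` with `ω i ∣ s * χ i` for all `i`. -/
def sVal (m : ℕ) (χ ω : Fin m → ℕ) : ℕ := sInf {s : ℕ | 0 < s ∧ ∀ i, ω i ∣ s * χ i}

/-- The exponents `d i = s(χ,ω)·χ i/ω i` of the map `e(χ/ω)`. -/
def dExp (m : ℕ) (χ ω : Fin m → ℕ) (i : Fin m) : ℕ := sVal m χ ω * χ i / ω i

/-- `IsNorm m χ v w` says that `w` is the normalisation `N_χ(v)`, i.e. `w` lies on the
sphere and has the form `(λ^{χ_0} v_0, …)` for some real `λ > 0`. -/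
def IsNorm (m : ℕ) (χ : Fin m → ℕ) (v : Fin m → ℂ) (w : Sph m) : Prop :=
  ∃ l : ℝ, 0 < l ∧ ∀ i, (w : Fin m → ℂ) i = (l : ℂ) ^ χ i * v i

/-- Coordinatewise powers of a point of the sphere. -/
def powVec (m : ℕ) (d : Fin m → ℕ) (z : Sph m) : Fin m → ℂ :=
  fun i => (z : Fin m → ℂ) i ^ d i

/-- `IsEMap m χ ω e` says that `e` is the canonical map `e(χ/ω) : P(ω) → P(χ)`:
it is continuous and sends `[z]_ω` to `[N_χ(z_0^{d_0}, …, z_n^{d_n})]_χ`. -/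
def IsEMap (m : ℕ) (χ ω : Fin m → ℕ) (e : WP m ω → WP m χ) : Prop :=
  Continuous e ∧ ∀ z w : Sph m,
    IsNorm m χ (powVec m (dExp m χ ω) z) w → e (wpMk m ω z) = wpMk m χ w

/-- `IsPowMap m χ r f` says that `f` is the `r`-th power map `e(r) : P(χ) → P(χ)`:
it is continuous and sends `[z]_χ` to `[N_χ(z_0^r, …, z_n^r)]_χ`. -/
def IsPowMap (m : ℕ) (χ : Fin m → ℕ) (r : ℕ) (f : WP m χ → WP m χ) : Prop :=
  Continuous f ∧ ∀ z w : Sph m,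
    IsNorm m χ (fun i => (z : Fin m → ℂ) i ^ r) w → f (wpMk m χ z) = wpMk m χ w

/-!
For `v ≠ 0` the normalisation `N_χ(v)` exists and is unique, because `l ↦ ‖l ·_χ v‖²` increases
strictly from `0` to `∞` on `[0, ∞)`. Normalising with weights `κ` and then raising to powers `d`
therefore gives the `χ`-normalisation of the composed powers whenever `κ i * d i = c * χ i`: the
scalar `λ^{κ_i d_i} = (λ^c)^{χ_i}` is absorbed into `N_χ`. By minimality of `s(χ,ω)` the integer
`s(χ,ω)` divides `s(σ,ω)·s(χ,σ)`, and the exponents satisfy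
`d(σ/ω)_i · d(χ/σ)_i = s' · d(χ/ω)_i`, so all three composites send `[z]_ω` to
`[N_χ(z_i^{s' d(χ/ω)_i})]_χ`.
-/

section WeightedNormalisation

variable {m : ℕ} {χ : Fin m → ℕ}

lemma norm_ofReal_pow_mul_sq (l : ℝ) (k : ℕ) (v : ℂ) :
    ‖(l : ℂ) ^ k * v‖ ^ 2 = l ^ (2 * k) * ‖v‖ ^ 2 := by
  rw [norm_mul, norm_pow, Complex.norm_real, Real.norm_eq_abs, mul_pow, ← pow_mul,
    mul_comm k 2, pow_mul, pow_mul, sq_abs]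

/-- The squared norm of `l ·_χ v = (l^{χ_0} v_0, …)`. -/
def weightedNormSq (χ : Fin m → ℕ) (v : Fin m → ℂ) (l : ℝ) : ℝ :=
  ∑ i, l ^ (2 * χ i) * ‖v i‖ ^ 2

lemma continuous_weightedNormSq (v : Fin m → ℂ) : Continuous (weightedNormSq χ v) := by
  unfold weightedNormSq
  fun_prop

lemma weightedNormSq_zero (hχ : ∀ i, 1 ≤ χ i) (v : Fin m → ℂ) : weightedNormSq χ v 0 = 0 :=
  Finset.sum_eq_zero fun i _ => by rw [zero_pow (by have := hχ i; omega), zero_mul]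

lemma weightedNormSq_strictMonoOn (hχ : ∀ i, 1 ≤ χ i) {v : Fin m → ℂ} (hv : v ≠ 0) :
    StrictMonoOn (weightedNormSq χ v) (Set.Ici 0) := by
  intro a ha b _ hab
  obtain ⟨j, hj⟩ := Function.ne_iff.mp hv
  refine Finset.sum_lt_sum (fun i _ => ?_) ⟨j, Finset.mem_univ j, ?_⟩
  · gcongr
  · have : 0 < ‖v j‖ := norm_pos_iff.mpr hj
    gcongr
    have := hχ j; omega

lemma tendsto_weightedNormSq_atTop (hχ : ∀ i, 1 ≤ χ i) {v : Fin m → ℂ} (hv : v ≠ 0) :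
    Filter.Tendsto (weightedNormSq χ v) Filter.atTop Filter.atTop := by
  obtain ⟨j, hj⟩ := Function.ne_iff.mp hv
  have hterm : Filter.Tendsto (fun l : ℝ => l ^ (2 * χ j) * ‖v j‖ ^ 2) Filter.atTop Filter.atTop :=
    (Filter.tendsto_pow_atTop (by have := hχ j; omega)).atTop_mul_const (by positivity)
  refine Filter.tendsto_atTop_mono' _ ?_ hterm
  filter_upwards [Filter.eventually_ge_atTop 0] with l hl
  exact Finset.single_le_sum (f := fun i => l ^ (2 * χ i) * ‖v i‖ ^ 2)
    (fun i _ => by positivity) (Finset.mem_univ j)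

lemma weightedNormSq_eq_one_of_isNorm {v : Fin m → ℂ} {w : Sph m} {l : ℝ}
    (hw : ∀ i, (w : Fin m → ℂ) i = (l : ℂ) ^ χ i * v i) : weightedNormSq χ v l = 1 := by
  simpa only [weightedNormSq, hw, norm_ofReal_pow_mul_sq] using w.2

lemma exists_isNorm (hχ : ∀ i, 1 ≤ χ i) {v : Fin m → ℂ} (hv : v ≠ 0) :
    ∃ w : Sph m, IsNorm m χ v w := by
  obtain ⟨M, hM, hM0⟩ := (((tendsto_weightedNormSq_atTop hχ hv).eventually_ge_atTop 1).and
    (Filter.eventually_ge_atTop 0)).exists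
  obtain ⟨l, ⟨hl0, -⟩, hl⟩ := intermediate_value_Icc hM0
    (continuous_weightedNormSq v).continuousOn
    ⟨(weightedNormSq_zero hχ v).le.trans zero_le_one, hM⟩
  have hl_pos : 0 < l := hl0.lt_of_ne <| by
    rintro rfl
    rw [weightedNormSq_zero hχ] at hl
    exact zero_ne_one hl
  refine ⟨⟨fun i => (l : ℂ) ^ χ i * v i, ?_⟩, l, hl_pos, fun i => rfl⟩
  simpa only [weightedNormSq, norm_ofReal_pow_mul_sq] using hl

lemma isNorm_unique (hχ : ∀ i, 1 ≤ χ i) {v : Fin m → ℂ} (hv : v ≠ 0) {w₁ w₂ : Sph m}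
    (h₁ : IsNorm m χ v w₁) (h₂ : IsNorm m χ v w₂) : w₁ = w₂ := by
  obtain ⟨a, ha, hwa⟩ := h₁
  obtain ⟨b, hb, hwb⟩ := h₂
  have hab : a = b := (weightedNormSq_strictMonoOn hχ hv).injOn ha.le hb.le <| by
    rw [weightedNormSq_eq_one_of_isNorm hwa, weightedNormSq_eq_one_of_isNorm hwb]
  exact Subtype.ext (funext fun i => by rw [hwa i, hwb i, hab])

lemma IsNorm.pow {κ d : Fin m → ℕ} {c : ℕ} (hd : ∀ i, κ i * d i = c * χ i)
    {v : Fin m → ℂ} {w w' : Sph m} (hw : IsNorm m κ v w) (hw' : IsNorm m χ (powVec m d w) w') :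
    IsNorm m χ (fun i => v i ^ d i) w' := by
  obtain ⟨l, hl, hwl⟩ := hw
  obtain ⟨l', hl', hwl'⟩ := hw'
  refine ⟨l' * l ^ c, by positivity, fun i => ?_⟩
  rw [hwl' i, powVec, hwl i, mul_pow, ← pow_mul, hd i]
  push_cast
  ring

end WeightedNormalisation

lemma Sph.coe_ne_zero {m : ℕ} (z : Sph m) : (z : Fin m → ℂ) ≠ 0 := by
  intro h
  simpa [h] using z.2

lemma powVec_ne_zero {m : ℕ} (d : Fin m → ℕ) (z : Sph m) : powVec m d z ≠ 0 := by
  obtain ⟨j, hj⟩ := Function.ne_iff.mp z.coe_ne_zero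
  exact Function.ne_iff.mpr ⟨j, pow_ne_zero _ hj⟩

section Exponents

variable {m : ℕ} {χ σ ω : Fin m → ℕ}

lemma sVal_spec (hω : ∀ i, 1 ≤ ω i) : 0 < sVal m χ ω ∧ ∀ i, ω i ∣ sVal m χ ω * χ i :=
  Nat.sInf_mem (⟨∏ i, ω i, Finset.prod_pos fun i _ => hω i,
    fun i => (Finset.dvd_prod_of_mem ω (Finset.mem_univ i)).mul_right _⟩ :
      {s : ℕ | 0 < s ∧ ∀ i, ω i ∣ s * χ i}.Nonempty)

lemma sVal_dvd (hω : ∀ i, 1 ≤ ω i) {s : ℕ} (hs : ∀ i, ω i ∣ s * χ i) : sVal m χ ω ∣ s := by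
  obtain ⟨hpos, hspec⟩ := sVal_spec (χ := χ) hω
  have hmod : ∀ i, ω i ∣ s % sVal m χ ω * χ i := fun i => by
    rw [Nat.mod_eq_sub_mul_div, Nat.sub_mul, mul_right_comm]
    exact Nat.dvd_sub (hs i) ((hspec i).mul_right _)
  by_contra hndvd
  exact (Nat.mod_lt s hpos).not_ge <|
    Nat.sInf_le ⟨Nat.pos_of_ne_zero (mt Nat.dvd_of_mod_eq_zero hndvd), hmod⟩

lemma sVal_dvd_mul_sVal (hω : ∀ i, 1 ≤ ω i) (hσ : ∀ i, 1 ≤ σ i) :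
    sVal m χ ω ∣ sVal m σ ω * sVal m χ σ :=
  sVal_dvd hω fun i => by
    rw [mul_assoc]
    exact ((sVal_spec hω).2 i).trans (mul_dvd_mul_left _ ((sVal_spec hσ).2 i))

lemma mul_dExp (hω : ∀ i, 1 ≤ ω i) (i : Fin m) : ω i * dExp m χ ω i = sVal m χ ω * χ i :=
  Nat.mul_div_cancel' ((sVal_spec hω).2 i)

lemma dExp_mul_dExp (hω : ∀ i, 1 ≤ ω i) (hσ : ∀ i, 1 ≤ σ i) (i : Fin m) :
    dExp m σ ω i * dExp m χ σ i =
      sVal m σ ω * sVal m χ σ / sVal m χ ω * dExp m χ ω i := by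
  set s' := sVal m σ ω * sVal m χ σ / sVal m χ ω
  have hs' : s' * sVal m χ ω = sVal m σ ω * sVal m χ σ :=
    Nat.div_mul_cancel (sVal_dvd_mul_sVal hω hσ)
  refine Nat.eq_of_mul_eq_mul_left (Nat.mul_pos (hω i) (hσ i)) ?_
  calc ω i * σ i * (dExp m σ ω i * dExp m χ σ i)
      = (ω i * dExp m σ ω i) * (σ i * dExp m χ σ i) := by ring
    _ = (sVal m σ ω * σ i) * (sVal m χ σ * χ i) := by rw [mul_dExp hω, mul_dExp hσ]
    _ = σ i * (s' * sVal m χ ω) * χ i := by rw [hs']; ring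
    _ = σ i * s' * (ω i * dExp m χ ω i) := by rw [mul_dExp hω]; ring
    _ = ω i * σ i * (s' * dExp m χ ω i) := by ring

end Exponents

def IsNormPowMap (m : ℕ) (χ ω d : Fin m → ℕ) (f : WP m ω → WP m χ) : Prop :=
  ∀ z w : Sph m, IsNorm m χ (powVec m d z) w → f (wpMk m ω z) = wpMk m χ w

lemma IsEMap.isNormPowMap {m : ℕ} {χ ω : Fin m → ℕ} {e : WP m ω → WP m χ}
    (he : IsEMap m χ ω e) : IsNormPowMap m χ ω (dExp m χ ω) e :=
  he.2

lemma IsPowMap.isNormPowMap {m : ℕ} {χ : Fin m → ℕ} {r : ℕ} {f : WP m χ → WP m χ}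
    (hf : IsPowMap m χ r f) : IsNormPowMap m χ χ (fun _ => r) f :=
  hf.2

lemma IsNormPowMap.comp_wpMk {m : ℕ} {ω κ χ d₁ d₂ D : Fin m → ℕ} {c : ℕ}
    {f : WP m ω → WP m κ} {g : WP m κ → WP m χ} (hκ : ∀ i, 1 ≤ κ i) (hχ : ∀ i, 1 ≤ χ i)
    (hf : IsNormPowMap m κ ω d₁ f) (hg : IsNormPowMap m χ κ d₂ g)
    (hd₂ : ∀ i, κ i * d₂ i = c * χ i) (hD : ∀ i, d₁ i * d₂ i = D i)
    {z W : Sph m} (hW : IsNorm m χ (powVec m D z) W) :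
    g (f (wpMk m ω z)) = wpMk m χ W := by
  obtain ⟨w, hw⟩ := exists_isNorm hκ (powVec_ne_zero d₁ z)
  obtain ⟨w', hw'⟩ := exists_isNorm hχ (powVec_ne_zero d₂ w)
  have hpow : (fun i => powVec m d₁ z i ^ d₂ i) = powVec m D z :=
    funext fun i => by simp only [powVec, ← hD, pow_mul]
  have hw'D : IsNorm m χ (powVec m D z) w' := hpow ▸ hw.pow hd₂ hw'
  rw [hf z w hw, hg w w' hw', isNorm_unique hχ (powVec_ne_zero D z) hw'D hW]

theorem statement4_general (n : ℕ) (ω σ χ : Fin (n + 1) → ℕ)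
    (hω : ∀ i, 1 ≤ ω i) (hσ : ∀ i, 1 ≤ σ i) (hχ : ∀ i, 1 ≤ χ i)
    (e1 : WP (n + 1) ω → WP (n + 1) σ) (h1 : IsEMap (n + 1) σ ω e1)
    (e2 : WP (n + 1) σ → WP (n + 1) χ) (h2 : IsEMap (n + 1) χ σ e2)
    (e3 : WP (n + 1) ω → WP (n + 1) χ) (h3 : IsEMap (n + 1) χ ω e3)
    (pχ : WP (n + 1) χ → WP (n + 1) χ)
    (hpχ : IsPowMap (n + 1) χ (sVal (n + 1) σ ω * sVal (n + 1) χ σ / sVal (n + 1) χ ω) pχ)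
    (pω : WP (n + 1) ω → WP (n + 1) ω)
    (hpω : IsPowMap (n + 1) ω (sVal (n + 1) σ ω * sVal (n + 1) χ σ / sVal (n + 1) χ ω) pω) :
    sVal (n + 1) χ ω ∣ sVal (n + 1) σ ω * sVal (n + 1) χ σ ∧
    0 < sVal (n + 1) σ ω * sVal (n + 1) χ σ / sVal (n + 1) χ ω ∧
    e2 ∘ e1 = pχ ∘ e3 ∧ e2 ∘ e1 = e3 ∘ pω := by
  set s' := sVal (n + 1) σ ω * sVal (n + 1) χ σ / sVal (n + 1) χ ω
  have hdvd := sVal_dvd_mul_sVal (χ := χ) hω hσ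
  have hs' : 0 < s' :=
    Nat.div_pos (Nat.le_of_dvd (Nat.mul_pos (sVal_spec hω).1 (sVal_spec hσ).1) hdvd)
      (sVal_spec hω).1
  have hcomp : ∀ z W, IsNorm (n + 1) χ (powVec (n + 1) (fun i => s' * dExp (n + 1) χ ω i) z) W →
      e2 (e1 (wpMk _ ω z)) = wpMk _ χ W ∧ pχ (e3 (wpMk _ ω z)) = wpMk _ χ W ∧
        e3 (pω (wpMk _ ω z)) = wpMk _ χ W := fun z W hW =>
    ⟨h1.isNormPowMap.comp_wpMk hσ hχ h2.isNormPowMap (mul_dExp hσ) (dExp_mul_dExp hω hσ) hW,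
      h3.isNormPowMap.comp_wpMk hχ hχ hpχ.isNormPowMap (fun _ => mul_comm _ _)
        (fun _ => mul_comm _ _) hW,
      hpω.isNormPowMap.comp_wpMk hω hχ h3.isNormPowMap (mul_dExp hω) (fun _ => rfl) hW⟩
  refine ⟨hdvd, hs', ?_, ?_⟩ <;> refine funext (Quot.ind fun z => ?_) <;>
    obtain ⟨W, hW⟩ := exists_isNorm hχ (powVec_ne_zero (fun i => s' * dExp (n + 1) χ ω i) z) <;>
    obtain ⟨h21, h3χ, hω3⟩ := hcomp z W hW
  · exact h21.trans h3χ.symm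
  · exact h21.trans hω3.symm

/-- For weight vectors `ω, σ, χ` the number
`s' = s(σ,ω)·s(χ,σ)/s(χ,ω)` is a positive integer, and
`e(χ/σ) ∘ e(σ/ω) = e(s') ∘ e(χ/ω) = e(χ/ω) ∘ e(s')`. -/
theorem statement4 (n : ℕ) (hn : 1 ≤ n) (ω σ χ : Fin (n + 1) → ℕ)
    (hω : ∀ i, 1 ≤ ω i) (hσ : ∀ i, 1 ≤ σ i) (hχ : ∀ i, 1 ≤ χ i)
    (e1 : WP (n + 1) ω → WP (n + 1) σ) (h1 : IsEMap (n + 1) σ ω e1)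
    (e2 : WP (n + 1) σ → WP (n + 1) χ) (h2 : IsEMap (n + 1) χ σ e2)
    (e3 : WP (n + 1) ω → WP (n + 1) χ) (h3 : IsEMap (n + 1) χ ω e3)
    (pχ : WP (n + 1) χ → WP (n + 1) χ)
    (hpχ : IsPowMap (n + 1) χ (sVal (n + 1) σ ω * sVal (n + 1) χ σ / sVal (n + 1) χ ω) pχ)
    (pω : WP (n + 1) ω → WP (n + 1) ω)
    (hpω : IsPowMap (n + 1) ω (sVal (n + 1) σ ω * sVal (n + 1) χ σ / sVal (n + 1) χ ω) pω) :
    sVal (n + 1) χ ω ∣ sVal (n + 1) σ ω * sVal (n + 1) χ σ ∧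
    0 < sVal (n + 1) σ ω * sVal (n + 1) χ σ / sVal (n + 1) χ ω ∧
    e2 ∘ e1 = pχ ∘ e3 ∧ e2 ∘ e1 = e3 ∘ pω :=
  statement4_general n ω σ χ hω hσ hχ e1 h1 e2 h2 e3 h3 pχ hpχ pω hpω
end
end

section
/- Let χ be a weight vector and let Q(χ) = {p_1, …, p_m} be the set of primes dividing at least one coordinate χ_i, with p-contents (p_i)χ. Then the map F : P(χ) → ∏_{i=1}^{m} P((p_i)χ) whose i-th component is e((p_i)χ/χ) is a homeomorphism onto the subspace {(z_1, …, z_m) : e(1/(p_1)χ)(z_1) = e(1/(p_2)χ)(z_2) = … = e(1/(p_m)χ)(z_m) in ℂP^n}, with the subspace topology of the product. That is, P(χ), together with the maps e((p_i)χ/χ), is the limit of the diagram of maps e(1/(p_i)χ) : P((p_i)χ) → ℂP^n. -/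
/-
Two points of the sphere define the same point of `P(ω)` iff they differ by the weighted action
of some `t ∈ ℂˣ`: the norm forces `‖t‖ = 1`. Up to normalisation, `e((p)χ/χ)` raises `z_i` to
`d_{p,i} = s_p / α_{p,i}`, where `χ_i = p^{a_i} α_{p,i}` with `p ∤ α_{p,i}` and
`s_p = s((p)χ, χ)` is the lcm of the `α_{p,j}`; `e(1/(p)χ)` raises `w_i` to
`d'_{p,i} = p^{A_p - a_i}` with `A_p = max_j a_j`. Since `d_{p,i} d'_{p,i} = lcm χ / χ_i` for
every `p`, the tuple `(e((p)χ/χ) x)_p` lies in the limit.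

Injectivity: if `z'_i^{d_{p,i}} = λ_p^{p^{a_i}} z_i^{d_{p,i}}` for all `p`, then `u_i = z'_i / z_i`
satisfies `u_i^{s_p} = λ_p^{χ_i}`. The `s_p` have no common prime factor, and a Bézout relation
`∑ b_p s_p = 1` gives `u_i = (∏ λ_p^{b_p})^{χ_i}`.

Surjectivity: after rescaling the representatives `y_p`, their `d'_{p,i}`-th powers are a common
point `W`. For fixed `i` the `d'_{p,i}` are powers of distinct primes, so the Chinese remainder
theorem applied to logarithms gives `z_i` with `z_i^{d_{p,i}} = y_{p,i}` for all `p`.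

Finally `P(χ)` is compact and each `P(ω)` is Hausdorff (the weighted circle action on the
sphere has compact graph and an open quotient map), so the continuous bijection is a
homeomorphism.
-/

noncomputable section

/-- The set `Q(χ)` of primes dividing at least one coordinate of `χ`, as a type. -/
abbrev PrimesOf (m : ℕ) (χ : Fin m → ℕ) : Type := {p : ℕ // p.Prime ∧ ∃ i, p ∣ χ i}

/-- The `p`-content of `χ`: the weight vector `(p^{a_0}, …, p^{a_n})` where `p^{a_i}`
is the exact power of `p` dividing `χ_i`. -/
def pCont (m : ℕ) (p : ℕ) (χ : Fin m → ℕ) : Fin m → ℕ :=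
  fun i => p ^ (χ i).factorization p

theorem eq_pow_of_pow_eq_pow {G ι : Type*} [CommGroup G] (s : Finset ι) {L : ι → ℕ} {b : ι → ℤ}
    (hb : ∑ p ∈ s, (L p : ℤ) * b p = 1) {u : G} {k : ℕ} {c : ι → G}
    (h : ∀ p ∈ s, u ^ L p = c p ^ k) : u = (∏ p ∈ s, c p ^ b p) ^ k := calc
  u = u ^ (∑ p ∈ s, (L p : ℤ) * b p) := by rw [hb, zpow_one]
  _ = ∏ p ∈ s, u ^ ((L p : ℤ) * b p) := by
    have := map_prod (zpowersHom G u) (fun p => Multiplicative.ofAdd ((L p : ℤ) * b p)) s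
    simpa only [zpowersHom_apply, ← ofAdd_sum, toAdd_ofAdd] using this
  _ = ∏ p ∈ s, (c p ^ b p) ^ k := Finset.prod_congr rfl fun p hp => by
    rw [zpow_mul, zpow_natCast, h p hp, ← zpow_natCast, ← zpow_mul, mul_comm, zpow_mul,
      zpow_natCast]
  _ = (∏ p ∈ s, c p ^ b p) ^ k := Finset.prod_pow _ _ _

open Complex in
theorem exists_pow_eq_of_pow_eq {ι : Type*} [Finite ι] {N : ℕ} (hN : N ≠ 0) {e f : ι → ℕ}
    (hef : ∀ p, e p * f p = N) (hf : Pairwise fun p q => Nat.Coprime (f p) (f q))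
    {y : ι → ℂ} {w : ℂ} (hy : ∀ p, y p ^ f p = w) : ∃ z : ℂ, ∀ p, z ^ e p = y p := by
  have he : ∀ p, e p ≠ 0 := fun p => left_ne_zero_of_mul (hef p ▸ hN)
  have hf0 : ∀ p, f p ≠ 0 := fun p => right_ne_zero_of_mul (hef p ▸ hN)
  rcases eq_or_ne w 0 with rfl | hw
  · exact ⟨0, fun p => by rw [zero_pow (he p), eq_comm, ← pow_eq_zero_iff (hf0 p), hy p]⟩
  have hy0 : ∀ p, y p ≠ 0 := fun p h0 => hw (by rw [← hy p, h0, zero_pow (hf0 p)])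
  have hlog : ∀ p, ∃ k : ℤ, f p * log (y p) = log w + k * (2 * Real.pi * I) := fun p =>
    exp_eq_exp_iff_exists_int.mp (by rw [exp_nat_mul, exp_log (hy0 p), hy p, exp_log hw])
  choose k hk using hlog
  -- `z = exp ((log w + 2πi n) / N)` with `n ≡ k p (mod f p)` for every `p`
  obtain ⟨n, hn⟩ := Ideal.exists_forall_sub_mem_ideal (I := fun p => Ideal.span {(f p : ℤ)})
    (fun p q hpq => (Ideal.isCoprime_span_singleton_iff _ _).mpr
      (Nat.isCoprime_iff_coprime.mpr (hf hpq))) k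
  refine ⟨exp ((log w + n * (2 * Real.pi * I)) / N), fun p => ?_⟩
  obtain ⟨j, hj⟩ := Ideal.mem_span_singleton'.mp (hn p)
  rw [← exp_nat_mul, ← exp_log (hy0 p), exp_eq_exp_iff_exists_int]
  refine ⟨j, ?_⟩
  have hjC : (n : ℂ) - k p = j * f p := by exact_mod_cast hj.symm
  have hfC : (f p : ℂ) ≠ 0 := Nat.cast_ne_zero.mpr (hf0 p)
  have heC : (e p : ℂ) ≠ 0 := Nat.cast_ne_zero.mpr (he p)
  rw [show (N : ℂ) = e p * f p by exact_mod_cast (hef p).symm]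
  field_simp
  linear_combination -hk p + 2 * Real.pi * I * hjC

namespace WeightedProjective

open Complex

variable {m : ℕ}

lemma exists_coord_ne_zero (z : Sph m) : ∃ j, (z : Fin m → ℂ) j ≠ 0 := by
  by_contra! h
  simpa [h] using z.2

section Topology

instance : CompactSpace (Sph m) := by
  refine isCompact_iff_compactSpace.mp <|
    (isCompact_closedBall (0 : Fin m → ℂ) 1).of_isClosed_subset
      (isClosed_eq (by fun_prop) continuous_const) fun z (hz : ∑ i, ‖z i‖ ^ 2 = 1) => ?_
  rw [mem_closedBall_zero_iff, pi_norm_le_iff_of_nonneg zero_le_one]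
  intro i
  refine (sq_le_one_iff₀ (norm_nonneg _)).mp ?_
  exact hz ▸ Finset.single_le_sum (fun j _ => sq_nonneg ‖z j‖) (Finset.mem_univ i)

variable (χ : Fin m → ℕ)

def circleAct (t : Circle) (z : Sph m) : Sph m :=
  ⟨fun i => (t : ℂ) ^ χ i * (z : Fin m → ℂ) i, by
    simpa only [norm_mul, norm_pow, Circle.norm_coe, one_pow, one_mul] using z.2⟩

lemma continuous_circleAct : Continuous fun tz : Circle × Sph m => circleAct χ tz.1 tz.2 := by
  refine Continuous.subtype_mk (continuous_pi fun i => ?_) _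
  exact ((continuous_subtype_val.comp continuous_fst).pow _).mul
    ((continuous_apply i).comp (continuous_subtype_val.comp continuous_snd))

lemma wRel_iff_exists_circleAct {z w : Sph m} :
    wRel m χ z w ↔ ∃ t : Circle, circleAct χ t z = w := by
  constructor
  · rintro ⟨t, ht, h⟩
    exact ⟨⟨t, mem_sphere_zero_iff_norm.2 ht⟩, Subtype.ext (funext fun i => (h i).symm)⟩
  · rintro ⟨t, rfl⟩
    exact ⟨t, Circle.norm_coe t, fun i => rfl⟩

lemma wRel_equivalence : Equivalence (wRel m χ) where
  refl z := ⟨1, by simp, fun i => by simp⟩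
  symm := by
    rintro z w ⟨t, ht, h⟩
    have ht0 : t ≠ 0 := norm_ne_zero_iff.mp (ht ▸ one_ne_zero)
    exact ⟨t⁻¹, by simp [ht], fun i => by
      rw [h i, inv_pow, inv_mul_cancel_left₀ (pow_ne_zero _ ht0)]⟩
  trans := by
    rintro z w v ⟨t, ht, h⟩ ⟨s, hs, h'⟩
    exact ⟨s * t, by simp [ht, hs], fun i => by rw [h' i, h i, mul_pow, mul_assoc]⟩

variable {χ} in
lemma wpMk_eq_wpMk_iff {z w : Sph m} : wpMk m χ z = wpMk m χ w ↔ wRel m χ z w :=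
  Quot.eq.trans (wRel_equivalence χ).eqvGen_iff

lemma isOpenQuotientMap_wpMk : IsOpenQuotientMap (wpMk m χ) := by
  refine ⟨Quot.mk_surjective, continuous_quot_mk, fun U hU => ?_⟩
  have hsat : wpMk m χ ⁻¹' (wpMk m χ '' U) = ⋃ t : Circle, circleAct χ t ⁻¹' U := by
    ext z
    simp only [Set.mem_preimage, Set.mem_image, Set.mem_iUnion, wpMk_eq_wpMk_iff]
    constructor
    · rintro ⟨u, hu, hrel⟩
      obtain ⟨t, rfl⟩ := (wRel_iff_exists_circleAct χ).mp ((wRel_equivalence χ).symm hrel)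
      exact ⟨t, hu⟩
    · rintro ⟨t, ht⟩
      exact ⟨_, ht, (wRel_equivalence χ).symm ((wRel_iff_exists_circleAct χ).mpr ⟨t, rfl⟩)⟩
  rw [isOpen_coinduced]
  change IsOpen (wpMk m χ ⁻¹' (wpMk m χ '' U))
  rw [hsat]
  exact isOpen_iUnion fun t =>
    hU.preimage ((continuous_circleAct χ).comp (Continuous.prodMk_right t))

instance : T2Space (WP m χ) := by
  rw [t2Space_iff_of_isOpenQuotientMap (isOpenQuotientMap_wpMk χ)]
  have : {q : Sph m × Sph m | wpMk m χ q.1 = wpMk m χ q.2} =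
      Set.range fun tz : Circle × Sph m => (tz.2, circleAct χ tz.1 tz.2) := by
    ext ⟨z, w⟩
    simp [wpMk_eq_wpMk_iff, wRel_iff_exists_circleAct]
  rw [this]
  exact (isCompact_range (continuous_snd.prodMk (continuous_circleAct χ))).isClosed

end Topology

def WEquiv (χ : Fin m → ℕ) (v w : Fin m → ℂ) : Prop :=
  ∃ t : ℂˣ, ∀ i, w i = (t : ℂ) ^ χ i * v i

namespace WEquiv

variable {χ : Fin m → ℕ} {u v w : Fin m → ℂ}

lemma symm (h : WEquiv χ v w) : WEquiv χ w v := by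
  obtain ⟨t, ht⟩ := h
  exact ⟨t⁻¹, fun i => by
    rw [ht i, Units.val_inv_eq_inv_val, inv_pow, inv_mul_cancel_left₀ (pow_ne_zero _ t.ne_zero)]⟩

lemma trans (h : WEquiv χ u v) (h' : WEquiv χ v w) : WEquiv χ u w := by
  obtain ⟨t, ht⟩ := h
  obtain ⟨s, hs⟩ := h'
  exact ⟨s * t, fun i => by rw [hs i, ht i, Units.val_mul, mul_pow, mul_assoc]⟩

lemma pow {B d : Fin m → ℕ} {k : ℕ} (hB : ∀ i, χ i * d i = B i * k) (h : WEquiv χ v w) :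
    WEquiv B (fun i => v i ^ d i) (fun i => w i ^ d i) := by
  obtain ⟨t, ht⟩ := h
  exact ⟨t ^ k, fun i => by
    dsimp only
    rw [ht i, mul_pow, ← pow_mul, hB i, Units.val_pow_eq_pow_val, ← pow_mul, mul_comm k]⟩

end WEquiv

lemma _root_.IsNorm.wEquiv {χ : Fin m → ℕ} {v : Fin m → ℂ} {w : Sph m}
    (h : IsNorm m χ v w) : WEquiv χ v w := by
  obtain ⟨l, hl, h⟩ := h
  exact ⟨Units.mk0 (l : ℂ) (ofReal_ne_zero.mpr hl.ne'), h⟩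

lemma sum_norm_pow_mul_sq (χ : Fin m → ℕ) (t : ℂ) (v : Fin m → ℂ) :
    ∑ i, ‖t ^ χ i * v i‖ ^ 2 = ∑ i, (‖t‖ ^ 2) ^ χ i * ‖v i‖ ^ 2 := by
  simp only [norm_mul, norm_pow, mul_pow, ← pow_mul, mul_comm 2]

section Normalization

variable {χ : Fin m → ℕ} (hχ : ∀ i, 1 ≤ χ i)
include hχ

lemma strictMonoOn_sum_pow_mul {b : Fin m → ℝ} (hb : ∀ i, 0 ≤ b i) {j : Fin m} (hj : 0 < b j) :
    StrictMonoOn (fun r : ℝ => ∑ i, r ^ χ i * b i) (Set.Ici 0) := by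
  intro x hx y _ hxy
  refine Finset.sum_lt_sum
    (fun i _ => mul_le_mul_of_nonneg_right (pow_le_pow_left₀ hx hxy.le _) (hb i))
    ⟨j, Finset.mem_univ j, mul_lt_mul_of_pos_right
      (pow_lt_pow_left₀ hxy hx (Nat.one_le_iff_ne_zero.mp (hχ j))) hj⟩

lemma norm_eq_one_of_forall_eq_pow_mul {z w : Sph m} {t : ℂ}
    (h : ∀ i, (w : Fin m → ℂ) i = t ^ χ i * (z : Fin m → ℂ) i) : ‖t‖ = 1 := by
  obtain ⟨j, hj⟩ := exists_coord_ne_zero z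
  have hsum : ∑ i, (‖t‖ ^ 2) ^ χ i * ‖(z : Fin m → ℂ) i‖ ^ 2 =
      ∑ i, (1 : ℝ) ^ χ i * ‖(z : Fin m → ℂ) i‖ ^ 2 := by
    rw [← sum_norm_pow_mul_sq χ]
    simp only [← h, w.2, one_pow, one_mul, z.2]
  have hsq := (strictMonoOn_sum_pow_mul hχ (b := fun i => ‖(z : Fin m → ℂ) i‖ ^ 2)
    (fun i => sq_nonneg _) (pow_pos (norm_pos_iff.mpr hj) 2)).injOn
    (Set.mem_Ici.mpr (sq_nonneg ‖t‖)) (Set.mem_Ici.mpr zero_le_one) hsum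
  exact (pow_eq_one_iff_of_nonneg (norm_nonneg t) two_ne_zero).mp hsq

lemma exists_isNorm {v : Fin m → ℂ} (hv : v ≠ 0) : ∃ w : Sph m, IsNorm m χ v w := by
  obtain ⟨j, hj⟩ := Function.ne_iff.mp hv
  set f : ℝ → ℝ := fun r => ∑ i, r ^ χ i * ‖v i‖ ^ 2
  have hbj : 0 < ‖v j‖ ^ 2 := pow_pos (norm_pos_iff.mpr hj) 2
  set C : ℝ := max 1 (1 / ‖v j‖ ^ 2)
  have hC : 1 ≤ C := le_max_left _ _
  have hfC : 1 ≤ f C := calc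
    1 ≤ C * ‖v j‖ ^ 2 := (div_le_iff₀ hbj).mp (le_max_right _ _)
    _ ≤ C ^ χ j * ‖v j‖ ^ 2 := by gcongr; exact le_self_pow₀ hC (by have := hχ j; omega)
    _ ≤ f C := Finset.single_le_sum (f := fun i => C ^ χ i * ‖v i‖ ^ 2)
        (fun i _ => by positivity) (Finset.mem_univ j)
  have hf0 : f 0 = 0 := Finset.sum_eq_zero fun i _ => by
    rw [zero_pow (by have := hχ i; omega), zero_mul]
  obtain ⟨r, hr, hfr⟩ := intermediate_value_Icc (zero_le_one.trans hC)
    (by fun_prop : Continuous f).continuousOn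
    (show (1 : ℝ) ∈ Set.Icc (f 0) (f C) from ⟨by rw [hf0]; exact zero_le_one, hfC⟩)
  have hr0 : 0 < r := hr.1.lt_of_ne (by rintro rfl; simp [hf0] at hfr)
  refine ⟨⟨fun i => (√r : ℂ) ^ χ i * v i, ?_⟩, √r, Real.sqrt_pos.mpr hr0, fun i => rfl⟩
  rw [sum_norm_pow_mul_sq χ, norm_real, Real.norm_eq_abs, sq_abs, Real.sq_sqrt hr.1]
  exact hfr

lemma wRel_iff_wEquiv {z w : Sph m} : wRel m χ z w ↔ WEquiv χ z w := by
  constructor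
  · rintro ⟨t, ht, h⟩
    exact ⟨Units.mk0 t (norm_ne_zero_iff.mp (ht ▸ one_ne_zero)), h⟩
  · rintro ⟨t, h⟩
    exact ⟨t, norm_eq_one_of_forall_eq_pow_mul hχ h, h⟩

lemma wpMk_eq_wpMk_iff_wEquiv {z w : Sph m} : wpMk m χ z = wpMk m χ w ↔ WEquiv χ z w :=
  wpMk_eq_wpMk_iff.trans (wRel_iff_wEquiv hχ)

end Normalization

section EMap

variable {A B : Fin m → ℕ} {e : WP m B → WP m A} (hA : ∀ i, 1 ≤ A i) (he : IsEMap m A B e)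
include hA he

lemma _root_.IsEMap.exists_apply_eq (z : Sph m) :
    ∃ w, e (wpMk m B z) = wpMk m A w ∧ WEquiv A (powVec m (dExp m A B) z) w := by
  obtain ⟨j, hj⟩ := exists_coord_ne_zero z
  obtain ⟨w, hw⟩ := exists_isNorm hA (v := powVec m (dExp m A B) z)
    (Function.ne_iff.mpr ⟨j, pow_ne_zero _ hj⟩)
  exact ⟨w, he.2 z w hw, hw.wEquiv⟩

lemma _root_.IsEMap.apply_eq_iff (z w : Sph m) :
    e (wpMk m B z) = wpMk m A w ↔ WEquiv A (powVec m (dExp m A B) z) w := by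
  obtain ⟨w', he', hw'⟩ := he.exists_apply_eq hA z
  rw [he', wpMk_eq_wpMk_iff_wEquiv hA]
  exact ⟨hw'.trans, hw'.symm.trans⟩

end EMap

section sVal

variable {A B : Fin m → ℕ} {s : ℕ}

lemma sVal_spec (hs0 : 0 < s) (hs : ∀ i, B i ∣ s * A i) :
    0 < sVal m A B ∧ ∀ i, B i ∣ sVal m A B * A i :=
  Nat.sInf_mem (s := {s | 0 < s ∧ ∀ i, B i ∣ s * A i}) ⟨s, hs0, hs⟩

lemma sVal_dvd (hs : ∀ i, B i ∣ s * A i) : sVal m A B ∣ s := by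
  rcases Nat.eq_zero_or_pos s with rfl | hs0
  · exact dvd_zero _
  obtain ⟨h0, hval⟩ := sVal_spec hs0 hs
  have hg : sVal m A B ≤ Nat.gcd (sVal m A B) s := Nat.sInf_le
    ⟨Nat.gcd_pos_of_pos_left _ h0, fun i => by
      rw [← Nat.gcd_mul_right]; exact Nat.dvd_gcd (hval i) (hs i)⟩
  rw [← (Nat.le_of_dvd h0 (Nat.gcd_dvd_left _ _)).antisymm hg]
  exact Nat.gcd_dvd_right _ _

lemma dExp_mul (hs0 : 0 < s) (hs : ∀ i, B i ∣ s * A i) (i : Fin m) :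
    dExp m A B i * B i = sVal m A B * A i :=
  Nat.div_mul_cancel ((sVal_spec hs0 hs).2 i)

end sVal

section pContent

variable {χ : Fin m → ℕ} {p : ℕ}

lemma dvd_prod_mul_pCont (i : Fin m) : χ i ∣ (∏ j, χ j) * pCont m p χ i :=
  dvd_mul_of_dvd_left (Finset.dvd_prod_of_mem _ (Finset.mem_univ i)) _

lemma pCont_dvd_prod_mul_one (i : Fin m) : pCont m p χ i ∣ (∏ j, χ j) * 1 :=
  dvd_mul_of_dvd_left ((Nat.ordProj_dvd (χ i) p).trans
    (Finset.dvd_prod_of_mem _ (Finset.mem_univ i))) _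

lemma sVal_pCont_dvd_prod_ordCompl : sVal m (pCont m p χ) χ ∣ ∏ j, ordCompl[p] (χ j) := by
  refine sVal_dvd fun i => ?_
  conv_lhs => rw [← Nat.ordProj_mul_ordCompl_eq_self (χ i) p]
  rw [pCont, mul_comm (∏ j, _)]
  exact mul_dvd_mul_left _
    (Finset.dvd_prod_of_mem (fun j => ordCompl[p] (χ j)) (Finset.mem_univ i))

lemma exists_dvd_of_dvd_sVal_pCont {r : ℕ} (hr : r.Prime) (h : r ∣ sVal m (pCont m p χ) χ) :
    ∃ j, r ∣ χ j := by
  obtain ⟨j, -, hj⟩ := (hr.prime.dvd_finsetProd_iff _).mp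
    (h.trans sVal_pCont_dvd_prod_ordCompl)
  exact ⟨j, hj.trans (Nat.ordCompl_dvd _ _)⟩

lemma one_le_pCont (hp : p.Prime) (i : Fin m) : 1 ≤ pCont m p χ i := pow_pos hp.pos _

variable (hχ : ∀ i, 1 ≤ χ i)
include hχ

lemma lcm_ne_zero : Finset.univ.lcm χ ≠ 0 := fun h => by
  obtain ⟨j, -, hj⟩ := Finset.lcm_eq_zero_iff.mp h
  exact absurd (hχ j) (by omega)

lemma dExp_pCont_mul (i : Fin m) :
    dExp m (pCont m p χ) χ i * χ i = sVal m (pCont m p χ) χ * pCont m p χ i :=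
  dExp_mul (Finset.prod_pos fun j _ => hχ j) dvd_prod_mul_pCont i

lemma dExp_one_pCont_mul (i : Fin m) :
    dExp m (fun _ => 1) (pCont m p χ) i * pCont m p χ i = sVal m (fun _ => 1) (pCont m p χ) := by
  simpa using dExp_mul (Finset.prod_pos fun j _ => hχ j) pCont_dvd_prod_mul_one i

lemma sVal_one_pCont_pos : 0 < sVal m (fun _ => 1) (pCont m p χ) :=
  (sVal_spec (Finset.prod_pos fun j _ => hχ j) pCont_dvd_prod_mul_one).1

variable (hp : p.Prime)
include hp

lemma dExp_pCont_mul_ordCompl (i : Fin m) :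
    dExp m (pCont m p χ) χ i * ordCompl[p] (χ i) = sVal m (pCont m p χ) χ := by
  have h := dExp_pCont_mul hχ i (p := p)
  rw [← Nat.ordProj_mul_ordCompl_eq_self (χ i) p, pCont, mul_left_comm, mul_comm _ (p ^ _)] at h
  exact Nat.eq_of_mul_eq_mul_left (pow_pos hp.pos _) h

lemma not_dvd_sVal_pCont : ¬ p ∣ sVal m (pCont m p χ) χ := fun h => by
  obtain ⟨j, -, hj⟩ := (hp.prime.dvd_finsetProd_iff _).mp
    (h.trans sVal_pCont_dvd_prod_ordCompl)
  exact Nat.not_dvd_ordCompl hp (by have := hχ j; omega) hj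

lemma sVal_pCont_dvd_ordCompl :
    sVal m (pCont m p χ) χ ∣ ordCompl[p] (Finset.univ.lcm χ) := by
  refine sVal_dvd fun j => ?_
  conv_lhs => rw [← Nat.ordProj_mul_ordCompl_eq_self (χ j) p]
  rw [pCont, mul_comm _ (p ^ _)]
  exact mul_dvd_mul_left _ (Nat.dvd_ordCompl_of_dvd_not_dvd
    ((Nat.ordCompl_dvd _ _).trans (Finset.dvd_lcm (Finset.mem_univ j)))
    (Nat.not_dvd_ordCompl hp (by have := hχ j; omega)))

lemma sVal_one_pCont_dvd_ordProj :
    sVal m (fun _ => 1) (pCont m p χ) ∣ ordProj[p] (Finset.univ.lcm χ) :=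
  sVal_dvd fun j => (mul_one (ordProj[p] _)).symm ▸
    (hp.pow_dvd_iff_dvd_ordProj (lcm_ne_zero hχ)).mp
      ((Nat.ordProj_dvd _ _).trans (Finset.dvd_lcm (Finset.mem_univ j)))

lemma mul_dExp_mul_dExp (i : Fin m) :
    χ i * (dExp m (pCont m p χ) χ i * dExp m (fun _ => 1) (pCont m p χ) i) =
      Finset.univ.lcm χ := by
  have hN : ∀ j, χ j * (dExp m (pCont m p χ) χ j * dExp m (fun _ => 1) (pCont m p χ) j) =
      sVal m (pCont m p χ) χ * sVal m (fun _ => 1) (pCont m p χ) := fun j => by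
    rw [← dExp_one_pCont_mul hχ j, ← mul_assoc, mul_comm (χ j), dExp_pCont_mul hχ j]
    ring
  rw [hN i]
  refine Nat.dvd_antisymm ?_ (Finset.lcm_dvd fun j _ => hN j ▸ dvd_mul_right _ _)
  rw [← Nat.ordProj_mul_ordCompl_eq_self (Finset.univ.lcm χ) p, mul_comm (ordProj[p] _)]
  exact mul_dvd_mul (sVal_pCont_dvd_ordCompl hχ hp) (sVal_one_pCont_dvd_ordProj hχ hp)

lemma dExp_pCont_ne_zero (i : Fin m) : dExp m (pCont m p χ) χ i ≠ 0 :=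
  left_ne_zero_of_mul (right_ne_zero_of_mul ((mul_dExp_mul_dExp hχ hp i).symm ▸ lcm_ne_zero hχ))

lemma dExp_one_pCont_ne_zero (i : Fin m) : dExp m (fun _ => 1) (pCont m p χ) i ≠ 0 :=
  right_ne_zero_of_mul (right_ne_zero_of_mul ((mul_dExp_mul_dExp hχ hp i).symm ▸ lcm_ne_zero hχ))

lemma dExp_one_pCont_dvd (i : Fin m) :
    dExp m (fun _ => 1) (pCont m p χ) i ∣ ordProj[p] (Finset.univ.lcm χ) :=
  (Dvd.intro _ (dExp_one_pCont_mul hχ i)).trans (sVal_one_pCont_dvd_ordProj hχ hp)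

end pContent

section Primes

variable {χ : Fin m → ℕ} (hχ : ∀ i, 1 ≤ χ i)
include hχ

lemma finite_primesOf : Finite (PrimesOf m χ) := by
  have hsub : {p | p.Prime ∧ ∃ i, p ∣ χ i} ⊆ ⋃ i, ((χ i).divisors : Set ℕ) :=
    fun p ⟨_, i, hi⟩ => Set.mem_iUnion.mpr
      ⟨i, Nat.mem_divisors.mpr ⟨hi, Nat.one_le_iff_ne_zero.mp (hχ i)⟩⟩
  exact ((Set.finite_iUnion fun i => (χ i).divisors.finite_toSet).subset hsub).to_subtype

lemma mul_dExp_mul_dExp_eq (i : Fin m) (p q : PrimesOf m χ) :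
    dExp m (pCont m p.1 χ) χ i * dExp m (fun _ => 1) (pCont m p.1 χ) i =
      dExp m (pCont m q.1 χ) χ i * dExp m (fun _ => 1) (pCont m q.1 χ) i :=
  Nat.eq_of_mul_eq_mul_left (hχ i)
    ((mul_dExp_mul_dExp hχ p.2.1 i).trans (mul_dExp_mul_dExp hχ q.2.1 i).symm)

lemma pairwise_coprime_dExp_one_pCont (i : Fin m) :
    Pairwise fun p q : PrimesOf m χ => Nat.Coprime (dExp m (fun _ => 1) (pCont m p.1 χ) i)
      (dExp m (fun _ => 1) (pCont m q.1 χ) i) := fun p q hpq =>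
  ((Nat.coprime_pow_primes _ _ p.2.1 q.2.1 fun h => hpq (Subtype.ext h)).coprime_dvd_left
    (dExp_one_pCont_dvd hχ p.2.1 i)).coprime_dvd_right (dExp_one_pCont_dvd hχ q.2.1 i)

/-- A common prime factor `r` of the `s((p)χ, χ)` would divide some `χ j`, hence lie in `Q(χ)`,
but `r ∤ s((r)χ, χ)`. -/
lemma exists_sum_sVal_pCont_mul_eq_one (hQ : Nonempty (PrimesOf m χ)) :
    ∃ (s : Finset (PrimesOf m χ)) (b : PrimesOf m χ → ℤ),
      ∑ p ∈ s, (sVal m (pCont m p.1 χ) χ : ℤ) * b p = 1 := by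
  have := finite_primesOf hχ
  have := Fintype.ofFinite (PrimesOf m χ)
  obtain ⟨p₀⟩ := hQ
  set G := Finset.univ.gcd fun p : PrimesOf m χ => (sVal m (pCont m p.1 χ) χ : ℤ)
  obtain ⟨g, hg⟩ := Finset.gcd_eq_sum_mul Finset.univ
    fun p : PrimesOf m χ => (sVal m (pCont m p.1 χ) χ : ℤ)
  have hG : IsUnit G := by
    rw [Int.isUnit_iff_natAbs_eq, Nat.eq_one_iff_not_exists_prime_dvd]
    intro r hr hrG
    have hdvd : ∀ p : PrimesOf m χ, r ∣ sVal m (pCont m p.1 χ) χ := fun p =>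
      Int.natCast_dvd_natCast.mp
        ((Int.natCast_dvd.mpr hrG).trans (Finset.gcd_dvd (Finset.mem_univ p)))
    obtain ⟨j, hj⟩ := exists_dvd_of_dvd_sVal_pCont hr (hdvd p₀)
    exact not_dvd_sVal_pCont hχ hr (hdvd ⟨r, hr, j, hj⟩)
  refine ⟨Finset.univ, fun p => g p * G, ?_⟩
  simp_rw [← mul_assoc, ← Finset.sum_mul, ← hg]
  exact Int.isUnit_mul_self hG

lemma wEquiv_of_forall_wEquiv_pow_dExp (hQ : Nonempty (PrimesOf m χ)) {v v' : Fin m → ℂ}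
    (h : ∀ p : PrimesOf m χ, WEquiv (pCont m p.1 χ)
      (fun i => v i ^ dExp m (pCont m p.1 χ) χ i) (fun i => v' i ^ dExp m (pCont m p.1 χ) χ i)) :
    WEquiv χ v v' := by
  choose t ht using h
  obtain ⟨s, b, hb⟩ := exists_sum_sVal_pCont_mul_eq_one hχ hQ
  obtain ⟨p₀⟩ := hQ
  refine ⟨∏ p ∈ s, t p ^ b p, fun i => ?_⟩
  have hdE := dExp_pCont_ne_zero hχ p₀.2.1 i
  have h₀ := ht p₀ i
  dsimp only at h₀
  rcases eq_or_ne (v i) 0 with hv | hv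
  · rw [hv, zero_pow hdE, mul_zero, pow_eq_zero_iff hdE] at h₀
    rw [hv, h₀, mul_zero]
  have hv' : v' i ≠ 0 := by
    rintro hv'
    rw [hv', zero_pow hdE] at h₀
    exact mul_ne_zero (pow_ne_zero _ (t p₀).ne_zero) (pow_ne_zero _ hv) h₀.symm
  have hpow : ∀ p ∈ s, Units.mk0 (v' i / v i) (div_ne_zero hv' hv) ^ sVal m (pCont m p.1 χ) χ =
      t p ^ χ i := fun p _ => Units.ext <| by
    have hp := ht p i
    dsimp only at hp
    rw [Units.val_pow_eq_pow_val, Units.val_mk0, Units.val_pow_eq_pow_val,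
      ← dExp_pCont_mul_ordCompl hχ p.2.1 i, pow_mul, div_pow, hp,
      mul_div_cancel_right₀ _ (pow_ne_zero _ hv), ← pow_mul, pCont,
      Nat.ordProj_mul_ordCompl_eq_self]
  have hμ := congrArg Units.val (eq_pow_of_pow_eq_pow s hb hpow)
  rw [Units.val_mk0, div_eq_iff hv] at hμ
  rw [hμ, Units.val_pow_eq_pow_val]

lemma exists_forall_wEquiv_pow_dExp (hQ : Nonempty (PrimesOf m χ))
    {y : PrimesOf m χ → Fin m → ℂ} {W : Fin m → ℂ} (hW : W ≠ 0)
    (h : ∀ p : PrimesOf m χ, WEquiv (fun _ => 1)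
      (fun i => y p i ^ dExp m (fun _ => 1) (pCont m p.1 χ) i) W) :
    ∃ z : Fin m → ℂ, z ≠ 0 ∧ ∀ p : PrimesOf m χ,
      WEquiv (pCont m p.1 χ) (fun i => z i ^ dExp m (pCont m p.1 χ) χ i) (y p) := by
  have := finite_primesOf hχ
  obtain ⟨p₀⟩ := hQ
  choose κ hκ using h
  simp only [pow_one] at hκ
  have hsP (p : PrimesOf m χ) := (sVal_one_pCont_pos hχ (p := p.1)).ne'
  choose ν hν using fun p => IsAlgClosed.exists_pow_nat_eq (κ p : ℂ) (Nat.pos_of_ne_zero (hsP p))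
  have hν0 (p : PrimesOf m χ) : ν p ≠ 0 := fun h0 =>
    (κ p).ne_zero (by rw [← hν p, h0, zero_pow (hsP p)])
  -- rescaled by `ν p`, every `y p i` becomes a `d'_{p,i}`-th root of `W i`
  choose z hz using fun i => exists_pow_eq_of_pow_eq
    (mul_ne_zero (dExp_pCont_ne_zero hχ p₀.2.1 i) (dExp_one_pCont_ne_zero hχ p₀.2.1 i))
    (fun p => mul_dExp_mul_dExp_eq hχ i p p₀) (pairwise_coprime_dExp_one_pCont hχ i)
    (y := fun p => ν p ^ pCont m p.1 χ i * y p i) (w := W i) fun p => by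
      rw [mul_pow, ← pow_mul, mul_comm (pCont m p.1 χ i), dExp_one_pCont_mul hχ i, hν p, hκ p i]
  refine ⟨z, fun hz0 => ?_, fun p => ⟨(Units.mk0 (ν p) (hν0 p))⁻¹, fun i => ?_⟩⟩
  · obtain ⟨j, hj⟩ := Function.ne_iff.mp hW
    have hzj := hz j p₀
    rw [hz0, Pi.zero_apply, zero_pow (dExp_pCont_ne_zero hχ p₀.2.1 j), eq_comm,
      mul_eq_zero_iff_left (pow_ne_zero _ (hν0 p₀))] at hzj
    rw [hκ p₀ j, hzj, zero_pow (dExp_one_pCont_ne_zero hχ p₀.2.1 j), mul_zero] at hj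
    exact hj rfl
  · dsimp only
    rw [hz i p, Units.val_inv_eq_inv_val, Units.val_mk0, inv_pow,
      inv_mul_cancel_left₀ (pow_ne_zero _ (hν0 p))]

end Primes

section Maps

variable {χ : Fin m → ℕ} (hχ : ∀ i, 1 ≤ χ i)
include hχ

lemma comp_wpMk_eq {p : ℕ} (hp : p.Prime) {E : WP m χ → WP m (pCont m p χ)}
    {Pj : WP m (pCont m p χ) → WP m (fun _ => 1)} (hE : IsEMap m (pCont m p χ) χ E)
    (hPj : IsEMap m (fun _ => 1) (pCont m p χ) Pj) {z W : Sph m}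
    (hW : WEquiv (fun _ => 1) (fun i => (z : Fin m → ℂ) i ^ (Finset.univ.lcm χ / χ i)) W) :
    Pj (E (wpMk m χ z)) = wpMk m (fun _ => 1) W := by
  obtain ⟨w, hEw, hw⟩ := hE.exists_apply_eq (one_le_pCont hp) z
  rw [hEw, hPj.apply_eq_iff (fun _ => le_rfl)]
  have hpow := hw.pow (B := fun _ => 1) (k := sVal m (fun _ => 1) (pCont m p χ))
    fun i => by rw [one_mul, mul_comm]; exact dExp_one_pCont_mul hχ i
  refine hpow.symm.trans ?_
  convert hW using 2 with i
  rw [powVec, ← pow_mul, Nat.eq_div_of_mul_eq_right (by have := hχ i; omega)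
    (mul_dExp_mul_dExp hχ hp i)]

lemma comp_eq_comp {p q : ℕ} (hp : p.Prime) (hq : q.Prime)
    {Ep : WP m χ → WP m (pCont m p χ)} {Pjp : WP m (pCont m p χ) → WP m (fun _ => 1)}
    {Eq : WP m χ → WP m (pCont m q χ)} {Pjq : WP m (pCont m q χ) → WP m (fun _ => 1)}
    (hEp : IsEMap m (pCont m p χ) χ Ep) (hPjp : IsEMap m (fun _ => 1) (pCont m p χ) Pjp)
    (hEq : IsEMap m (pCont m q χ) χ Eq) (hPjq : IsEMap m (fun _ => 1) (pCont m q χ) Pjq)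
    (x : WP m χ) : Pjp (Ep x) = Pjq (Eq x) := by
  obtain ⟨z, rfl⟩ := Quot.exists_rep x
  obtain ⟨j, hj⟩ := exists_coord_ne_zero z
  obtain ⟨W, hW⟩ := exists_isNorm (fun _ => le_rfl)
    (v := fun i => (z : Fin m → ℂ) i ^ (Finset.univ.lcm χ / χ i))
    (Function.ne_iff.mpr ⟨j, pow_ne_zero _ hj⟩)
  exact (comp_wpMk_eq hχ hp hEp hPjp hW.wEquiv).trans
    (comp_wpMk_eq hχ hq hEq hPjq hW.wEquiv).symm

variable (hQ : Nonempty (PrimesOf m χ)) {E : ∀ p : PrimesOf m χ, WP m χ → WP m (pCont m p.1 χ)}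
  (hE : ∀ p, IsEMap m (pCont m p.1 χ) χ (E p))
include hQ hE

lemma eq_of_forall_isEMap_apply_eq {x x' : WP m χ} (h : ∀ p, E p x = E p x') : x = x' := by
  obtain ⟨z, rfl⟩ := Quot.exists_rep x
  obtain ⟨z', rfl⟩ := Quot.exists_rep x'
  refine (wpMk_eq_wpMk_iff_wEquiv hχ).mpr (wEquiv_of_forall_wEquiv_pow_dExp hχ hQ fun p => ?_)
  obtain ⟨w', hEw', hw'⟩ := (hE p).exists_apply_eq (one_le_pCont p.2.1) z'
  exact (((hE p).apply_eq_iff (one_le_pCont p.2.1) z w').mp ((h p).trans hEw')).trans hw'.symm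

lemma exists_forall_isEMap_apply_eq
    {Pj : ∀ p : PrimesOf m χ, WP m (pCont m p.1 χ) → WP m (fun _ => 1)}
    (hPj : ∀ p, IsEMap m (fun _ => 1) (pCont m p.1 χ) (Pj p))
    {u : ∀ p : PrimesOf m χ, WP m (pCont m p.1 χ)} (hu : ∀ p q, Pj p (u p) = Pj q (u q)) :
    ∃ x, ∀ p, E p x = u p := by
  choose y hy using fun p => Quot.exists_rep (u p)
  obtain ⟨p₀⟩ := hQ
  obtain ⟨W, hW⟩ := Quot.exists_rep (Pj p₀ (u p₀))
  obtain ⟨j, hj⟩ := exists_coord_ne_zero W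
  obtain ⟨z, hz0, hz⟩ := exists_forall_wEquiv_pow_dExp hχ ⟨p₀⟩ (W := W)
    (Function.ne_iff.mpr ⟨j, hj⟩) fun p =>
      ((hPj p).apply_eq_iff (fun _ => le_rfl) (y p) W).mp
        ((congrArg (Pj p) (hy p)).trans ((hu p p₀).trans hW.symm))
  obtain ⟨z₁, hz₁⟩ := exists_isNorm hχ hz0
  refine ⟨wpMk m χ z₁, fun p => ?_⟩
  rw [← hy p]
  refine ((hE p).apply_eq_iff (one_le_pCont p.2.1) z₁ (y p)).mpr ?_
  exact (hz₁.wEquiv.pow (B := pCont m p.1 χ) (k := sVal m (pCont m p.1 χ) χ)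
    fun i => by rw [mul_comm (χ i), dExp_pCont_mul hχ i, mul_comm]).symm.trans (hz p)

end Maps

end WeightedProjective

open WeightedProjective in
theorem statement10_general (n : ℕ) (χ : Fin (n + 1) → ℕ) (hχ : ∀ i, 1 ≤ χ i)
    (hQ : Nonempty (PrimesOf (n + 1) χ))
    (E : ∀ p : PrimesOf (n + 1) χ, WP (n + 1) χ → WP (n + 1) (pCont (n + 1) p.1 χ))
    (hE : ∀ p, IsEMap (n + 1) (pCont (n + 1) p.1 χ) χ (E p))
    (Pj : ∀ p : PrimesOf (n + 1) χ, WP (n + 1) (pCont (n + 1) p.1 χ) → WP (n + 1) (fun _ => 1))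
    (hPj : ∀ p, IsEMap (n + 1) (fun _ => 1) (pCont (n + 1) p.1 χ) (Pj p)) :
    ∃ F : WP (n + 1) χ ≃ₜ
        {u : ∀ p : PrimesOf (n + 1) χ, WP (n + 1) (pCont (n + 1) p.1 χ) //
          ∀ p q, Pj p (u p) = Pj q (u q)},
      ∀ (x : WP (n + 1) χ) (p : PrimesOf (n + 1) χ),
        (F x : ∀ p : PrimesOf (n + 1) χ, WP (n + 1) (pCont (n + 1) p.1 χ)) p = E p x := by
  let F : WP (n + 1) χ → {u : ∀ p : PrimesOf (n + 1) χ, WP (n + 1) (pCont (n + 1) p.1 χ) //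
      ∀ p q, Pj p (u p) = Pj q (u q)} := fun x =>
    ⟨fun p => E p x, fun p q => comp_eq_comp hχ p.2.1 q.2.1 (hE p) (hPj p) (hE q) (hPj q) x⟩
  have hF : Function.Bijective F := by
    refine ⟨fun x x' h => eq_of_forall_isEMap_apply_eq hχ hQ hE fun p =>
      congrFun (congrArg Subtype.val h) p, fun u => ?_⟩
    obtain ⟨x, hx⟩ := exists_forall_isEMap_apply_eq hχ hQ hE hPj u.2
    exact ⟨x, Subtype.ext (funext hx)⟩
  have hFc : Continuous F := (continuous_pi fun p => (hE p).1).subtype_mk _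
  exact ⟨(show Continuous (Equiv.ofBijective F hF) from hFc).homeoOfEquivCompactToT2,
    fun x p => rfl⟩

/-- `P(χ)`, with the extraction maps `e((p)χ/χ)`, is the limit of the
diagram of the maps `e(1/(p)χ) : P((p)χ) → ℂP^n` over the primes `p ∈ Q(χ)`: the map
with components `e((p)χ/χ)` is a homeomorphism onto the subspace of the product consisting
of tuples with a common image in `ℂP^n`. -/
theorem statement10 (n : ℕ) (hn : 1 ≤ n) (χ : Fin (n + 1) → ℕ) (hχ : ∀ i, 1 ≤ χ i)
    (hQ : Nonempty (PrimesOf (n + 1) χ))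
    (E : ∀ p : PrimesOf (n + 1) χ, WP (n + 1) χ → WP (n + 1) (pCont (n + 1) p.1 χ))
    (hE : ∀ p, IsEMap (n + 1) (pCont (n + 1) p.1 χ) χ (E p))
    (Pj : ∀ p : PrimesOf (n + 1) χ, WP (n + 1) (pCont (n + 1) p.1 χ) → WP (n + 1) (fun _ => 1))
    (hPj : ∀ p, IsEMap (n + 1) (fun _ => 1) (pCont (n + 1) p.1 χ) (Pj p)) :
    ∃ F : WP (n + 1) χ ≃ₜ
        {u : ∀ p : PrimesOf (n + 1) χ, WP (n + 1) (pCont (n + 1) p.1 χ) //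
          ∀ p q, Pj p (u p) = Pj q (u q)},
      ∀ (x : WP (n + 1) χ) (p : PrimesOf (n + 1) χ),
        (F x : ∀ p : PrimesOf (n + 1) χ, WP (n + 1) (pCont (n + 1) p.1 χ)) p = E p x :=
  statement10_general n χ hχ hQ E hE Pj hPj
end
end
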